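/- arXiv:2307.08203 — 5 statements merged into one kernel-verified Lean document; each statement's English description precedes it below -/
import Mathlib

section
/- Let D = (D₁, …, D_J)ᵀ be a J-dimensional standard normal random vector N(0_J, I_J) and let a > 0 (so that P(DᵀD < a) > 0). Then for every t ≥ 0, P(|D₁| ≤ t | DᵀD < a) ≥ P(|D₁| ≤ t); that is, the truncated normal ℒ ~ D₁ | {DᵀD < a} is more peaked than a standard normal random variable. -/
open MeasureTheory ProbabilityTheory
open scoped ProbabilityTheory

/-- The standard Gaussian measure on `ℝ^J`: the product of `J` standard normals. -/
noncomputable def stdGaussian (J : ℕ) : Measure (Fin J → ℝ) :=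
  Measure.pi (fun _ => gaussianReal 0 1)

/-!
Split `D = (D₁, D')` with `D₁` independent of `D'`. Given `D₁ = y`, the probability of the
truncation event is `K y = P(y² + ‖D'‖² < a)`, which decreases in `|y|`. So `K` is at least
`c = inf_{|y| ≤ t} K` on `B = {|y| ≤ t}` and at most `c` off `B`, and a Chebyshev-type
rearrangement gives `P(B) · E[K(D₁)] ≤ E[K(D₁); B]`, i.e.
`P(|D₁| ≤ t) · P(DᵀD < a) ≤ P(|D₁| ≤ t, DᵀD < a)`.
-/

open scoped ENNReal

theorem measure_mul_lintegral_le_setLIntegral {α : Type*} [MeasurableSpace α] (μ : Measure α)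
    [IsProbabilityMeasure μ] {B : Set α} (hB : MeasurableSet B) (K : α → ℝ≥0∞)
    (hK : ∀ y ∈ B, ∀ y' ∉ B, K y' ≤ K y) :
    μ B * ∫⁻ y, K y ∂μ ≤ ∫⁻ y in B, K y ∂μ := by
  set c := ⨅ y ∈ B, K y
  have h_out : ∫⁻ y in Bᶜ, K y ∂μ ≤ c * μ Bᶜ :=
    (setLIntegral_le_iSup_mul K hB.compl).trans <| by
      gcongr
      exact iSup₂_le fun y' hy' => le_iInf₂ fun y hy => hK y hy y' hy'
  have h_in : c * μ B ≤ ∫⁻ y in B, K y ∂μ := iInf_mul_le_setLIntegral K hB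
  calc μ B * ∫⁻ y, K y ∂μ
      = μ B * ∫⁻ y in B, K y ∂μ + μ B * ∫⁻ y in Bᶜ, K y ∂μ := by
        rw [← lintegral_add_compl K hB, mul_add]
    _ ≤ μ B * ∫⁻ y in B, K y ∂μ + μ B * (c * μ Bᶜ) := by gcongr
    _ = μ B * ∫⁻ y in B, K y ∂μ + μ Bᶜ * (c * μ B) := by ring
    _ ≤ μ B * ∫⁻ y in B, K y ∂μ + μ Bᶜ * ∫⁻ y in B, K y ∂μ := by gcongr
    _ = ∫⁻ y in B, K y ∂μ := by
        rw [← add_mul, measure_add_measure_compl hB, measure_univ, one_mul]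

theorem measure_mul_prod_le_prod_inter {α β : Type*} [MeasurableSpace α] [MeasurableSpace β]
    (μ : Measure α) [IsProbabilityMeasure μ] (ν : Measure β) [SFinite ν]
    {S : Set (α × β)} (hS : MeasurableSet S) {B : Set α} (hB : MeasurableSet B)
    (hslice : ∀ y ∈ B, ∀ y' ∉ B, Prod.mk y' ⁻¹' S ⊆ Prod.mk y ⁻¹' S) :
    μ B * μ.prod ν S ≤ μ.prod ν (S ∩ Prod.fst ⁻¹' B) := by
  have h_inter : μ.prod ν (S ∩ Prod.fst ⁻¹' B) = (μ.restrict B).prod ν S := by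
    have := Measure.prod_restrict (μ := μ) (ν := ν) B Set.univ
    rw [Measure.restrict_univ, Set.prod_univ] at this
    rw [this, Measure.restrict_apply hS]
  rw [h_inter, Measure.prod_apply hS, Measure.prod_apply hS]
  exact measure_mul_lintegral_le_setLIntegral μ hB _ fun y hy y' hy' =>
    measure_mono (hslice y hy y' hy')

theorem measure_abs_le_mul_prod_sq_add_lt_le {β : Type*} [MeasurableSpace β]
    (μ : Measure ℝ) [IsProbabilityMeasure μ] (ν : Measure β) [SFinite ν]
    {g : β → ℝ} (hg : Measurable g) (a t : ℝ) :
    μ {y | |y| ≤ t} * μ.prod ν {p | p.1 ^ 2 + g p.2 < a}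
      ≤ μ.prod ν ({p | p.1 ^ 2 + g p.2 < a} ∩ {p | |p.1| ≤ t}) := by
  refine measure_mul_prod_le_prod_inter μ ν ?_ (measurableSet_le measurable_norm measurable_const)
    fun y hy y' hy' z hz => ?_
  · exact measurableSet_lt ((measurable_fst.pow_const 2).add (hg.comp measurable_snd))
      measurable_const
  · have hy_sq : y ^ 2 < y' ^ 2 := sq_lt_sq.2 (lt_of_le_of_lt hy (not_le.1 hy'))
    simp only [Set.mem_preimage, Set.mem_ofPred_eq] at hz ⊢
    linarith

theorem gaussianReal_isOpenPosMeasure (m : ℝ) {v : NNReal} (hv : v ≠ 0) :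
    (gaussianReal m v).IsOpenPosMeasure :=
  ⟨fun _ hU hne h => hU.measure_ne_zero volume hne (gaussianReal_absolutelyContinuous' m hv h)⟩

instance stdGaussian.isProbabilityMeasure (J : ℕ) : IsProbabilityMeasure (stdGaussian J) := by
  unfold _root_.stdGaussian; infer_instance

instance stdGaussian.isOpenPosMeasure (J : ℕ) : (stdGaussian J).IsOpenPosMeasure :=
  haveI := gaussianReal_isOpenPosMeasure 0 one_ne_zero
  Measure.pi.isOpenPosMeasure _

theorem measurePreserving_piFinSuccAbove_stdGaussian (n : ℕ) :
    MeasurePreserving (MeasurableEquiv.piFinSuccAbove (fun _ => ℝ) 0) (stdGaussian (n + 1))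
      ((gaussianReal 0 1).prod (stdGaussian n)) :=
  measurePreserving_piFinSuccAbove (fun _ => gaussianReal 0 1) 0

theorem truncatedNormal_lt_morePeaked_than_stdNormal_general
    (J : ℕ) (hJ : 0 < J) (a : ℝ) (ha : 0 < a) (t : ℝ) :
    gaussianReal 0 1 {y : ℝ | |y| ≤ t}
      ≤ (stdGaussian J)[|{x | ∑ i, (x i) ^ 2 < a}] {x | |x ⟨0, hJ⟩| ≤ t} := by
  obtain ⟨n, rfl⟩ : ∃ n, J = n + 1 := ⟨J - 1, (Nat.succ_pred_eq_of_pos hJ).symm⟩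
  set S : Set (Fin (n + 1) → ℝ) := {x | ∑ i, (x i) ^ 2 < a}
  have hS_open : IsOpen S := isOpen_lt (by fun_prop) continuous_const
  have hS_pos : stdGaussian (n + 1) S ≠ 0 :=
    hS_open.measure_ne_zero _ ⟨0, by simpa [S] using ha⟩
  rw [cond_apply hS_open.measurableSet, mul_comm, ← div_eq_mul_inv,
    ENNReal.le_div_iff_mul_le (.inl hS_pos) (.inl (measure_ne_top _ _))]
  have hmp := measurePreserving_piFinSuccAbove_stdGaussian n
  have h_corr := measure_abs_le_mul_prod_sq_add_lt_le (gaussianReal 0 1) (stdGaussian n)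
    (g := fun z => ∑ j, z j ^ 2) (by fun_prop) a t
  rw [← hmp.measure_preimage (by measurability), ← hmp.measure_preimage (by measurability)] at h_corr
  convert h_corr using 3 <;> simp [S, Fin.sum_univ_succ, Fin.tail]

/-- For a `J`-dimensional standard normal vector `D` and `a > 0`, the truncated normal
`ℒ ~ D₁ | {DᵀD < a}` is more peaked than a standard normal: for every `t ≥ 0`,
`P(|D₁| ≤ t | DᵀD < a) ≥ P(|D₁| ≤ t)`. -/
theorem truncatedNormal_lt_morePeaked_than_stdNormal
    (J : ℕ) (hJ : 0 < J) (a : ℝ) (ha : 0 < a) (t : ℝ) (ht : 0 ≤ t) :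
    gaussianReal 0 1 {y : ℝ | |y| ≤ t}
      ≤ (stdGaussian J)[|{x | ∑ i, (x i) ^ 2 < a}] {x | |x ⟨0, hJ⟩| ≤ t} :=
  truncatedNormal_lt_morePeaked_than_stdNormal_general J hJ a ha t
end

section
/- Let D be a J-dimensional standard normal random vector N(0_J, I_J) and let a ≥ 0. Then for every convex set C ⊆ ℝ^J symmetric about the origin, P(D ∈ C | DᵀD ≥ a) ≤ P(D ∈ C); that is, D is more peaked than D conditioned on the event {DᵀD ≥ a}. -/
open MeasureTheory ProbabilityTheory
open scoped ProbabilityTheory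

/-!
In polar coordinates `x = r • θ` the Gaussian measure is a product of a measure on the unit
sphere and a radial measure `m` on `(0, ∞)`. Replacing `C` by its closure (same measure, since
the frontier of a convex set is Lebesgue-null), each ray meets `C` in an initial segment `K θ`,
because a closed symmetric convex set is star-convex at `0`, while the tail event
`{√a ≤ ‖x‖}` meets every ray in the same final segment `T`. On a linearly ordered space an
initial and a final segment satisfy `m (T ∩ K) * m univ ≤ m K * m T`: either they are disjoint,
or `K` contains the complement of `T`. Integrating over the sphere gives
`P (tail ∩ C) ≤ P C * P tail`, which is the claim.
-/

open Set Real Metric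
open scoped ENNReal

theorem MeasureTheory.lintegral_fin_nat_prod_eq_prod {n : ℕ} {α : Type*} [MeasurableSpace α]
    {μ : Fin n → Measure α} [∀ i, SigmaFinite (μ i)]
    {f : Fin n → α → ℝ≥0∞} (hf : ∀ i, Measurable (f i)) :
    ∫⁻ x : Fin n → α, ∏ i, f i (x i) ∂(Measure.pi μ) =
      ∏ i, ∫⁻ x, f i x ∂(μ i) := by
  induction n with
  | zero => simp
  | succ n ih =>
    calc
      _ = ∫⁻ x : α × (Fin n → α), f 0 x.1 * ∏ i : Fin n, f i.succ (x.2 i)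
            ∂((μ 0).prod (Measure.pi fun i ↦ μ i.succ)) := by
        rw [← (measurePreserving_piFinSuccAbove μ 0).symm.lintegral_comp_emb
          (MeasurableEquiv.measurableEmbedding _)]
        simp_rw [MeasurableEquiv.piFinSuccAbove_symm_apply, Fin.insertNthEquiv,
          Fin.prod_univ_succ, Fin.insertNth_zero, Equiv.coe_fn_mk, Fin.cons_succ,
          Fin.zero_succAbove, cast_eq, Fin.cons_zero]
      _ = (∫⁻ x, f 0 x ∂μ 0) * ∏ i : Fin n, ∫⁻ x, f i.succ x ∂(μ i.succ) := by
        rw [← ih fun i ↦ hf i.succ]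
        exact lintegral_prod_mul (hf 0).aemeasurable
          (Finset.measurable_prod _ fun (i : Fin n) _ ↦
            (hf i.succ).comp (measurable_pi_apply i)).aemeasurable
      _ = _ := (Fin.prod_univ_succ (fun i ↦ ∫⁻ x, f i x ∂(μ i))).symm

theorem MeasureTheory.measure_inter_mul_measure_univ_le
    {α : Type*} [LinearOrder α] [MeasurableSpace α] (m : Measure α) {T K : Set α}
    (hT : IsUpperSet T) (hTm : MeasurableSet T) (hK : IsLowerSet K) :
    m (T ∩ K) * m univ ≤ m K * m T := by
  rcases (T ∩ K).eq_empty_or_nonempty with h | ⟨x, hxT, hxK⟩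
  · simp [h]
  have hTc : Tᶜ ⊆ K := fun y hy ↦ hK (not_le.mp fun hxy ↦ hy (hT hxy hxT)).le hxK
  calc m (T ∩ K) * m univ = m (T ∩ K) * m T + m (T ∩ K) * m Tᶜ := by
        rw [← measure_add_measure_compl hTm, mul_add]
    _ ≤ m (T ∩ K) * m T + m T * m Tᶜ := by
        gcongr
        exact inter_subset_left
    _ = (m (T ∩ K) + m Tᶜ) * m T := by ring
    _ = m K * m T := by
        rw [← measure_inter_add_sdiff K hTm, sdiff_eq, inter_eq_right.mpr hTc, inter_comm]

theorem Convex.starConvex_zero_of_neg_mem {𝕜 F : Type*} [Field 𝕜] [LinearOrder 𝕜]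
    [IsStrictOrderedRing 𝕜] [AddCommGroup F] [Module 𝕜 F] {A : Set F} (hA : Convex 𝕜 A)
    (hsymm : ∀ x ∈ A, -x ∈ A) : StarConvex 𝕜 0 A := by
  rcases A.eq_empty_or_nonempty with rfl | ⟨x, hx⟩
  · exact starConvex_empty 0
  · refine hA.starConvex ?_
    simpa [← smul_add] using hA hx (hsymm x hx) (by norm_num : (0 : 𝕜) ≤ 1 / 2)
      (by norm_num : (0 : 𝕜) ≤ 1 / 2) (by norm_num)

theorem norm_coe_smul_coe_sphere {E : Type*} [NormedAddCommGroup E] [NormedSpace ℝ E]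
    (θ : sphere (0 : E) 1) (r : Ioi (0 : ℝ)) : ‖(r : ℝ) • (θ : E)‖ = r := by
  rw [norm_smul, norm_eq_of_mem_sphere θ, mul_one, Real.norm_of_nonneg r.2.out.le]

section Radial

variable {E : Type*} [NormedAddCommGroup E] [NormedSpace ℝ E] [MeasurableSpace E] [BorelSpace E]
  [FiniteDimensional ℝ E] (μ : Measure E) [μ.IsAddHaarMeasure]

theorem MeasureTheory.lintegral_eq_lintegral_toSphere_lintegral [Nontrivial E]
    {f : E → ℝ≥0∞} (hf : Measurable f) :
    ∫⁻ x, f x ∂μ = ∫⁻ θ : sphere (0 : E) 1,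
      ∫⁻ r : Ioi (0 : ℝ), f ((r : ℝ) • (θ : E))
        ∂(Measure.volumeIoiPow (Module.finrank ℝ E - 1)) ∂μ.toSphere := by
  calc ∫⁻ x, f x ∂μ = ∫⁻ x in {0}ᶜ, f x ∂μ := by rw [restrict_compl_singleton]
    _ = ∫⁻ x : ({0}ᶜ : Set E), f x ∂(μ.comap (↑)) :=
        (lintegral_subtype_comap (measurableSet_singleton 0).compl f).symm
    _ = ∫⁻ p : sphere (0 : E) 1 × Ioi (0 : ℝ), f ((p.2 : ℝ) • (p.1 : E))
          ∂(μ.toSphere.prod (Measure.volumeIoiPow (Module.finrank ℝ E - 1))) := by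
        rw [← μ.measurePreserving_homeomorphUnitSphereProd.lintegral_comp_emb
          (homeomorphUnitSphereProd E).measurableEmbedding]
        refine lintegral_congr fun x ↦ ?_
        simp [smul_inv_smul₀ (norm_ne_zero_iff.mpr x.2)]
    _ = _ := lintegral_prod _ (by fun_prop)

namespace MeasureTheory.Measure

noncomputable def withRadialDensity (μ : Measure E) (φ : ℝ → ℝ≥0∞) : Measure E :=
  μ.withDensity fun x ↦ φ ‖x‖

theorem withRadialDensity_apply_eq_lintegral_toSphere [Nontrivial E] {φ : ℝ → ℝ≥0∞}
    (hφ : Measurable φ) {B : Set E} (hB : MeasurableSet B) :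
    μ.withRadialDensity φ B = ∫⁻ θ : sphere (0 : E) 1,
      (volumeIoiPow (Module.finrank ℝ E - 1)).withDensity (fun r ↦ φ r)
        {r | (r : ℝ) • (θ : E) ∈ B} ∂μ.toSphere := by
  rw [withRadialDensity, withDensity_apply _ hB, ← lintegral_indicator hB,
    lintegral_eq_lintegral_toSphere_lintegral μ
      ((hφ.comp measurable_norm).indicator (f := fun x ↦ φ ‖x‖) hB)]
  refine lintegral_congr fun θ ↦ ?_
  have hray : MeasurableSet {r : Ioi (0 : ℝ) | (r : ℝ) • (θ : E) ∈ B} :=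
    (measurable_subtype_coe.smul_const _) hB
  rw [withDensity_apply _ hray, ← lintegral_indicator hray]
  refine lintegral_congr fun r ↦ ?_
  by_cases hr : (r : ℝ) • (θ : E) ∈ B <;> simp [hr, norm_coe_smul_coe_sphere]

theorem withRadialDensity_inter_mul_le_of_starConvex {φ : ℝ → ℝ≥0∞} (hφ : Measurable φ)
    {A : Set E} (hAm : MeasurableSet A) (hA : StarConvex ℝ 0 A) (b : ℝ) :
    μ.withRadialDensity φ ({x | b ≤ ‖x‖} ∩ A) * μ.withRadialDensity φ univ
      ≤ μ.withRadialDensity φ A * μ.withRadialDensity φ {x | b ≤ ‖x‖} := by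
  -- In dimension 0 there are no polar coordinates, but the tail set is `univ` or `∅`.
  obtain _ | _ := subsingleton_or_nontrivial E
  · have : {x : E | b ≤ ‖x‖} = univ ∨ {x : E | b ≤ ‖x‖} = ∅ := by
      by_cases hb : b ≤ 0
      · exact .inl (eq_univ_of_forall fun x ↦ hb.trans (norm_nonneg x))
      · refine .inr (eq_empty_of_forall_notMem fun x hx ↦ hb ?_)
        simpa [Subsingleton.elim x 0] using hx
    rcases this with h | h <;> simp [h, mul_comm]
  set m := (volumeIoiPow (Module.finrank ℝ E - 1)).withDensity fun r : Ioi (0 : ℝ) ↦ φ r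
  set T : Set (Ioi (0 : ℝ)) := {r | b ≤ r}
  set K : sphere (0 : E) 1 → Set (Ioi (0 : ℝ)) := fun θ ↦ {r | (r : ℝ) • (θ : E) ∈ A}
  have hK (θ : sphere (0 : E) 1) : IsLowerSet (K θ) := fun r s hsr hr ↦ by
    have hpos : (0 : ℝ) < r := r.2.out
    simpa [K, smul_smul, div_mul_cancel₀ _ hpos.ne'] using
      hA.smul_mem hr (div_nonneg s.2.out.le hpos.le) ((div_le_one hpos).mpr hsr)
  have hKm : Measurable fun θ ↦ m (K θ) :=
    measurable_measure_prodMk_left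
      (s := {p : sphere (0 : E) 1 × Ioi (0 : ℝ) | (p.2 : ℝ) • (p.1 : E) ∈ A})
      (measurableSet_preimage (by fun_prop) hAm)
  have hSm : MeasurableSet {x : E | b ≤ ‖x‖} :=
    measurableSet_le measurable_const measurable_norm
  simp only [withRadialDensity_apply_eq_lintegral_toSphere μ hφ, hSm, hAm, hSm.inter hAm,
    MeasurableSet.univ, mem_inter_iff, mem_ofPred_eq, norm_coe_smul_coe_sphere, ofPred_and,
    mem_univ, ofPred_true, lintegral_const]
  have hT : IsUpperSet T := fun _ _ hrs hr ↦ le_trans (α := ℝ) hr hrs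
  have hTm : MeasurableSet T := measurableSet_le measurable_const measurable_subtype_coe
  calc (∫⁻ θ, m (T ∩ K θ) ∂μ.toSphere) * (m univ * μ.toSphere univ)
      ≤ (∫⁻ θ, m (T ∩ K θ) * m univ ∂μ.toSphere) * μ.toSphere univ := by
        rw [← mul_assoc]
        gcongr
        exact lintegral_mul_const_le _ _
    _ ≤ (∫⁻ θ, m (K θ) * m T ∂μ.toSphere) * μ.toSphere univ :=
        mul_le_mul_left (lintegral_mono fun θ ↦
          measure_inter_mul_measure_univ_le m hT hTm (hK θ)) _
    _ = (∫⁻ θ, m (K θ) ∂μ.toSphere) * (m T * μ.toSphere univ) := by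
        rw [lintegral_mul_const _ hKm, mul_assoc]

theorem withRadialDensity_inter_mul_le_of_convex {φ : ℝ → ℝ≥0∞} (hφ : Measurable φ)
    {A : Set E} (hA : Convex ℝ A) (hsymm : ∀ x ∈ A, -x ∈ A) (b : ℝ) :
    μ.withRadialDensity φ ({x | b ≤ ‖x‖} ∩ A) * μ.withRadialDensity φ univ
      ≤ μ.withRadialDensity φ A * μ.withRadialDensity φ {x | b ≤ ‖x‖} := by
  -- `A` need not be measurable; its closure is, and differs from `A` by a null set.
  have hcl : μ.withRadialDensity φ (closure A) = μ.withRadialDensity φ A :=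
    measure_closure_of_null_frontier
      (withDensity_absolutelyContinuous μ _ (hA.addHaar_frontier μ))
  have hsymm_cl (x : E) (hx : x ∈ closure A) : -x ∈ closure A :=
    map_mem_closure continuous_neg hx hsymm
  calc _ ≤ μ.withRadialDensity φ ({x | b ≤ ‖x‖} ∩ closure A) *
          μ.withRadialDensity φ univ := by
        gcongr
        exact subset_closure
    _ ≤ μ.withRadialDensity φ (closure A) * μ.withRadialDensity φ {x | b ≤ ‖x‖} :=
        withRadialDensity_inter_mul_le_of_starConvex μ hφ isClosed_closure.measurableSet
          (hA.closure.starConvex_zero_of_neg_mem hsymm_cl) b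
    _ = _ := by rw [hcl]

end MeasureTheory.Measure

end Radial

theorem ProbabilityTheory.cond_apply_le_of_measure_inter_le_mul {Ω : Type*} [MeasurableSpace Ω]
    {μ : Measure Ω} [IsFiniteMeasure μ] {s t : Set Ω} (hs : MeasurableSet s)
    (h : μ (s ∩ t) ≤ μ t * μ s) : μ[|s] t ≤ μ t := by
  rw [cond_apply hs]
  rcases eq_or_ne (μ s) 0 with h0 | h0
  · simp [measure_mono_null inter_subset_left h0]
  · exact (ENNReal.inv_mul_le_iff h0 (measure_ne_top μ s)).mpr (by rwa [mul_comm])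

noncomputable def stdGaussianRadialPDF (J : ℕ) (r : ℝ) : ℝ≥0∞ :=
  ENNReal.ofReal ((√(2 * π))⁻¹ ^ J * exp (-r ^ 2 / 2))

lemma measurable_stdGaussianRadialPDF (J : ℕ) : Measurable (stdGaussianRadialPDF J) :=
  ENNReal.measurable_ofReal.comp (by fun_prop)

lemma prod_gaussianPDF_eq_stdGaussianRadialPDF {J : ℕ} (x : Fin J → ℝ) :
    ∏ i, gaussianPDF 0 1 (x i) = stdGaussianRadialPDF J ‖WithLp.toLp 2 x‖ := by
  simp_rw [gaussianPDF, gaussianPDFReal, stdGaussianRadialPDF, EuclideanSpace.real_norm_sq_eq]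
  rw [← ENNReal.ofReal_prod_of_nonneg fun i _ ↦ by positivity, Finset.prod_mul_distrib,
    ← exp_sum, ← Finset.sum_div, ← Finset.sum_neg_distrib]
  simp

instance (J : ℕ) : IsProbabilityMeasure (stdGaussian J) := by
  unfold _root_.stdGaussian
  infer_instance

lemma stdGaussian_eq_map_withRadialDensity (J : ℕ) :
    stdGaussian J = ((volume : Measure (EuclideanSpace ℝ (Fin J))).withRadialDensity
      (stdGaussianRadialPDF J)).map (MeasurableEquiv.toLp 2 (Fin J → ℝ)).symm := by
  unfold _root_.stdGaussian
  refine Measure.pi_eq fun s _ ↦ ?_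
  rw [MeasurableEquiv.map_apply, Measure.withRadialDensity, withDensity_apply']
  have hpres := EuclideanSpace.volume_preserving_symm_measurableEquiv_toLp (Fin J)
  refine (hpres.setLIntegral_comp_preimage_emb (MeasurableEquiv.measurableEmbedding _)
    (fun y ↦ stdGaussianRadialPDF J ‖WithLp.toLp 2 y‖) _).trans ?_
  simp_rw [← prod_gaussianPDF_eq_stdGaussianRadialPDF, volume_pi, Measure.restrict_pi_pi,
    gaussianReal_apply 0 one_ne_zero]
  exact lintegral_fin_nat_prod_eq_prod fun _ ↦ measurable_gaussianPDF 0 1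

theorem stdNormal_morePeaked_than_conditional_ge_general
    (J : ℕ) (a : ℝ)
    (C : Set (Fin J → ℝ)) (hconv : Convex ℝ C) (hsymm : ∀ x ∈ C, -x ∈ C) :
    (stdGaussian J)[|{x | a ≤ ∑ i, (x i) ^ 2}] C ≤ stdGaussian J C := by
  have hs : MeasurableSet {x : Fin J → ℝ | a ≤ ∑ i, x i ^ 2} :=
    measurableSet_le measurable_const (by fun_prop)
  have htail : (MeasurableEquiv.toLp 2 (Fin J → ℝ)).symm ⁻¹' {x | a ≤ ∑ i, x i ^ 2}
      = {x | √a ≤ ‖x‖} := by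
    ext x
    simp [Real.sqrt_le_left (norm_nonneg x), EuclideanSpace.real_norm_sq_eq]
  have hconv' : Convex ℝ ((MeasurableEquiv.toLp 2 (Fin J → ℝ)).symm ⁻¹' C) :=
    hconv.linear_preimage (WithLp.linearEquiv 2 ℝ (Fin J → ℝ)).toLinearMap
  have hcorr : stdGaussian J ({x | a ≤ ∑ i, x i ^ 2} ∩ C) * stdGaussian J univ
      ≤ stdGaussian J C * stdGaussian J {x | a ≤ ∑ i, x i ^ 2} := by
    rw [stdGaussian_eq_map_withRadialDensity]
    simp only [MeasurableEquiv.map_apply, preimage_inter, htail, preimage_univ]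
    exact (volume : Measure (EuclideanSpace ℝ (Fin J))).withRadialDensity_inter_mul_le_of_convex
      (measurable_stdGaussianRadialPDF J) hconv' (fun x hx ↦ hsymm _ hx) √a
  exact cond_apply_le_of_measure_inter_le_mul hs (by simpa using hcorr)

/-- A `J`-dimensional standard normal vector `D` is more peaked than `D` conditioned on the
event `{DᵀD ≥ a}`: for every convex set `C ⊆ ℝ^J` symmetric about the origin,
`P(D ∈ C | DᵀD ≥ a) ≤ P(D ∈ C)`. -/
theorem stdNormal_morePeaked_than_conditional_ge
    (J : ℕ) (a : ℝ) (ha : 0 ≤ a)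
    (C : Set (Fin J → ℝ)) (hconv : Convex ℝ C) (hsymm : ∀ x ∈ C, -x ∈ C) :
    (stdGaussian J)[|{x | a ≤ ∑ i, (x i) ^ 2}] C ≤ stdGaussian J C :=
  stdNormal_morePeaked_than_conditional_ge_general J a C hconv hsymm
end

section
/- Conditional weak convergence: let (A_N, B_N, C_N) be a sequence of random elements of ℝ^p × ℝ^q × ℝ^r converging in distribution to (A, B, C), and let φ : ℝ^q × ℝ^r → {0,1} be a measurable function whose set of discontinuity points has measure zero under the law of (B, C). Fix t ∈ {0,1} with P(φ(B, C) = t) > 0. Then P(φ(B_N, C_N) = t) → P(φ(B, C) = t) > 0, and the conditional law of (A_N, B_N) given the event {φ(B_N, C_N) = t} converges weakly to the conditional law of (A, B) given {φ(B, C) = t}. -/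
open MeasureTheory ProbabilityTheory Filter Topology
open scoped ProbabilityTheory BoundedContinuousFunction

/-- Weak convergence of a sequence of measures: convergence of integrals of all bounded
continuous real-valued functions. -/
def WeakTendsto {E : Type*} [MeasurableSpace E] [TopologicalSpace E]
    (μs : ℕ → Measure E) (μ : Measure E) : Prop :=
  ∀ f : E →ᵇ ℝ, Tendsto (fun n => ∫ x, f x ∂(μs n)) atTop (𝓝 (∫ x, f x ∂μ))

/-!
Since `φ` takes only the values `0` and `1`, it is locally constant wherever it is continuous,
so the boundary of the event `E = {φ(B, C) = t}` lies in the discontinuity set of `φ` and is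
null for the limit law. By the portmanteau theorem `P(E_N) → P(E) > 0`, and for every open `G`
the sets `E ∩ G` and `interior E ∩ G` differ by a null set, so
`liminf P(G | E_N) ≥ P(interior E ∩ G) / P(E) = P(G | E)`: the conditional laws converge weakly
by the converse half of the portmanteau theorem. Projecting onto `(A, B)` is continuous.
-/

section Portmanteau

variable {Ω : Type*} [MeasurableSpace Ω] [TopologicalSpace Ω] {μ : Measure Ω} {μs : ℕ → Measure Ω}

theorem WeakTendsto.le_liminf_measure_open [OpensMeasurableSpace Ω] [HasOuterApproxClosed Ω]
    [IsProbabilityMeasure μ] [∀ n, IsProbabilityMeasure (μs n)] (h : WeakTendsto μs μ)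
    {G : Set Ω} (hG : IsOpen G) :
    μ G ≤ atTop.liminf fun n => μs n G :=
  ProbabilityMeasure.le_liminf_measure_open_of_tendsto
    (μs := fun n => ⟨μs n, inferInstance⟩) (μ := ⟨μ, inferInstance⟩)
    (ProbabilityMeasure.tendsto_iff_forall_integral_tendsto.2 h) hG

theorem WeakTendsto.map [OpensMeasurableSpace Ω] {Ω' : Type*} [MeasurableSpace Ω']
    [TopologicalSpace Ω'] [BorelSpace Ω'] (h : WeakTendsto μs μ) {g : Ω → Ω'}
    (hg : Continuous g) :
    WeakTendsto (fun n => (μs n).map g) (μ.map g) := by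
  intro f
  simp only [integral_map hg.aemeasurable f.continuous.measurable.aestronglyMeasurable]
  exact h (f.compContinuous ⟨g, hg⟩)

variable (h_opens : ∀ G, IsOpen G → μ G ≤ atTop.liminf fun n => μs n G)
  {E : Set Ω} (hE : μ (frontier E) = 0)
include h_opens hE

theorem measure_inter_le_liminf_of_null_frontier {G : Set Ω} (hG : IsOpen G) :
    μ (E ∩ G) ≤ atTop.liminf fun n => μs n (E ∩ G) :=
  calc μ (E ∩ G) ≤ μ (interior E ∩ G ∪ frontier E) :=
        measure_mono fun x ⟨hxE, hxG⟩ => by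
          by_cases hx : x ∈ interior E
          · exact Or.inl ⟨hx, hxG⟩
          · exact Or.inr ⟨subset_closure hxE, hx⟩
    _ ≤ μ (interior E ∩ G) := (measure_union_le _ _).trans_eq (by rw [hE, add_zero])
    _ ≤ atTop.liminf fun n => μs n (interior E ∩ G) := h_opens _ (isOpen_interior.inter hG)
    _ ≤ atTop.liminf fun n => μs n (E ∩ G) :=
        liminf_le_liminf <| .of_forall fun n =>
          measure_mono (Set.inter_subset_inter_left _ interior_subset)

variable [OpensMeasurableSpace Ω] [IsProbabilityMeasure μ] [∀ n, IsProbabilityMeasure (μs n)]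

theorem cond_le_liminf_cond_of_null_frontier {G : Set Ω} (hG : IsOpen G) :
    μ[G|E] ≤ atTop.liminf fun n => (μs n)[G|E] := by
  have hmass : Tendsto (fun n => μs n E) atTop (𝓝 (μ E)) :=
    tendsto_measure_of_null_frontier h_opens hE
  simp only [cond_apply' hG.measurableSet]
  calc (μ E)⁻¹ * μ (E ∩ G)
      ≤ (atTop.liminf fun n => (μs n E)⁻¹) * atTop.liminf fun n => μs n (E ∩ G) := by
        rw [(tendsto_inv_iff.2 hmass).liminf_eq]
        gcongr
        exact measure_inter_le_liminf_of_null_frontier h_opens hE hG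
    _ ≤ atTop.liminf fun n => (μs n E)⁻¹ * μs n (E ∩ G) := ENNReal.le_liminf_mul

theorem weakTendsto_cond_of_null_frontier (hμE : μ E ≠ 0) :
    WeakTendsto (fun n => (μs n)[|E]) (μ[|E]) := by
  obtain ⟨N, hN⟩ := eventually_atTop.1 <|
    (tendsto_measure_of_null_frontier h_opens hE).eventually_ne hμE
  have := cond_isProbabilityMeasure hμE
  -- `(μs n)[|E]` is a probability measure only once `μs n E ≠ 0`, hence the shift by `N`.
  have (n : ℕ) := cond_isProbabilityMeasure (hN (n + N) (Nat.le_add_left N n))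
  intro f
  rw [← tendsto_add_atTop_iff_nat N]
  refine BoundedContinuousFunction.tendsto_integral_of_forall_integral_le_liminf_integral
    (fun f hf => ?_) f
  refine integral_le_liminf_integral_of_forall_isOpen_measure_le_liminf_measure hf fun G hG => ?_
  rw [liminf_nat_add (fun n => (μs n)[G|E]) N]
  exact cond_le_liminf_cond_of_null_frontier h_opens hE hG

end Portmanteau

section LocallyConstant

variable {X Y : Type*} [TopologicalSpace X] [TopologicalSpace Y] {φ : X → Y} {D : Set Y}
  [DiscreteTopology D]

theorem ContinuousAt.eventually_eq_of_forall_mem (hφD : ∀ x, φ x ∈ D) {x : X}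
    (hx : ContinuousAt φ x) : ∀ᶠ y in 𝓝 x, φ y = φ x := by
  have hψ : ContinuousAt (D.codRestrict φ hφD) x := hx.codRestrict hφD
  filter_upwards [hψ.preimage_mem_nhds ((isOpen_discrete {D.codRestrict φ hφD x}).mem_nhds rfl)]
    with y hy
  exact congrArg Subtype.val hy

theorem frontier_setOf_eq_subset_of_forall_mem (hφD : ∀ x, φ x ∈ D) (t : Y) :
    frontier {x | φ x = t} ⊆ {x | ¬ ContinuousAt φ x} := by
  intro x ⟨hx_closure, hx_interior⟩ hx
  have hconst := hx.eventually_eq_of_forall_mem hφD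
  by_cases hxt : φ x = t
  · exact hx_interior (mem_interior_iff_mem_nhds.2 (hconst.mono fun y hy => hy.trans hxt))
  · obtain ⟨y, hyt, hyx⟩ :=
      ((mem_closure_iff_frequently.1 hx_closure).and_eventually hconst).exists
    exact hxt (hyx.symm.trans hyt)

end LocallyConstant

theorem conditional_weak_convergence_general (p q r : ℕ)
    (μs : ℕ → Measure ((Fin p → ℝ) × ((Fin q → ℝ) × (Fin r → ℝ))))
    (μ : Measure ((Fin p → ℝ) × ((Fin q → ℝ) × (Fin r → ℝ))))
    [∀ n, IsProbabilityMeasure (μs n)] [IsProbabilityMeasure μ]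
    (hconv : WeakTendsto μs μ)
    (φ : (Fin q → ℝ) × (Fin r → ℝ) → ℝ)
    (hφ01 : ∀ x, φ x = 0 ∨ φ x = 1)
    (hdisc : μ.map Prod.snd {x | ¬ ContinuousAt φ x} = 0)
    (t : ℝ)
    (hpos : 0 < μ {ω | φ ω.2 = t}) :
    Tendsto (fun n => (μs n) {ω | φ ω.2 = t}) atTop (𝓝 (μ {ω | φ ω.2 = t})) ∧
      WeakTendsto
        (fun n => ((μs n)[|{ω | φ ω.2 = t}]).map (fun ω => (ω.1, ω.2.1)))
        ((μ[|{ω | φ ω.2 = t}]).map (fun ω => (ω.1, ω.2.1))) := by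
  have h_opens (G) (hG : IsOpen G) := hconv.le_liminf_measure_open hG
  have hfrontier : frontier {ω : (Fin p → ℝ) × ((Fin q → ℝ) × (Fin r → ℝ)) | φ ω.2 = t} ⊆
      Prod.snd ⁻¹' {x | ¬ ContinuousAt φ x} :=
    (frontier_setOf_eq_subset_of_forall_mem (D := {0, 1}) (φ := φ ∘ Prod.snd)
      (fun ω => hφ01 ω.2) t).trans fun ω hω hφω => hω (hφω.comp continuousAt_snd)
  have hE : μ (frontier {ω | φ ω.2 = t}) = 0 :=
    measure_mono_null hfrontier <| nonpos_iff_eq_zero.1 <|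
      (Measure.le_map_apply measurable_snd.aemeasurable _).trans hdisc.le
  exact ⟨tendsto_measure_of_null_frontier h_opens hE,
    (weakTendsto_cond_of_null_frontier h_opens hE hpos.ne').map (by fun_prop)⟩

/-- **Conditional weak convergence.** If `(A_N, B_N, C_N) ⇝ (A, B, C)` in
`ℝ^p × (ℝ^q × ℝ^r)` (laws `μs N` and `μ`), `φ : ℝ^q × ℝ^r → {0,1}` is measurable with
discontinuity set null under the law of `(B, C)`, and `P(φ(B,C) = t) > 0` for a fixed
`t ∈ {0,1}`, then `P(φ(B_N,C_N) = t) → P(φ(B,C) = t)` and the conditional law of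
`(A_N, B_N)` given `{φ(B_N,C_N) = t}` converges weakly to the conditional law of `(A, B)`
given `{φ(B,C) = t}`. -/
theorem conditional_weak_convergence (p q r : ℕ)
    (μs : ℕ → Measure ((Fin p → ℝ) × ((Fin q → ℝ) × (Fin r → ℝ))))
    (μ : Measure ((Fin p → ℝ) × ((Fin q → ℝ) × (Fin r → ℝ))))
    [∀ n, IsProbabilityMeasure (μs n)] [IsProbabilityMeasure μ]
    (hconv : WeakTendsto μs μ)
    (φ : (Fin q → ℝ) × (Fin r → ℝ) → ℝ) (hφmeas : Measurable φ)
    (hφ01 : ∀ x, φ x = 0 ∨ φ x = 1)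
    (hdisc : μ.map Prod.snd {x | ¬ ContinuousAt φ x} = 0)
    (t : ℝ) (ht : t = 0 ∨ t = 1)
    (hpos : 0 < μ {ω | φ ω.2 = t}) :
    Tendsto (fun n => (μs n) {ω | φ ω.2 = t}) atTop (𝓝 (μ {ω | φ ω.2 = t})) ∧
      WeakTendsto
        (fun n => ((μs n)[|{ω | φ ω.2 = t}]).map (fun ω => (ω.1, ω.2.1)))
        ((μ[|{ω | φ ω.2 = t}]).map (fun ω => (ω.1, ω.2.1))) :=
  conditional_weak_convergence_general p q r μs μ hconv φ hφ01 hdisc t hpos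
end

section
/- Under a completely randomized treatment-control experiment with centered covariates, the exact covariance matrix of the difference in covariate means is Cov(τ̂_x) = (N / (N₀ N₁)) S_x², equivalently N·Cov(τ̂_x) = (e₀ e₁)^{-1} S_x², where S_x² = (N−1)^{-1} Σ_{i=1}^N x_i x_iᵀ (assume N ≥ 2). -/
open Finset

/-- The set of assignment vectors of a completely randomized experiment: vectors
`z ∈ {0,1}^N` with exactly `N₁` ones (treated units). -/
def crDesign (N N₁ : ℕ) : Finset (Fin N → Bool) :=
  univ.filter fun z => (univ.filter fun i => z i = true).card = N₁

/-- Expectation of a statistic over the uniform randomization distribution of `Z`. -/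
noncomputable def crExp (N N₁ : ℕ) (f : (Fin N → Bool) → ℝ) : ℝ :=
  (∑ z ∈ crDesign N N₁, f z) / (crDesign N N₁).card

/-- The difference in means of a unit-level variable `v` between treated and control groups. -/
noncomputable def diffMeans (N N₁ N₀ : ℕ) (v : Fin N → ℝ) (z : Fin N → Bool) : ℝ :=
  (∑ i ∈ univ.filter fun i => z i = true, v i) / N₁
    - (∑ i ∈ univ.filter fun i => z i = false, v i) / N₀

/-! For centered `v`, the control total is minus the treated total `T_v(z) = ∑_{i treated} v i`,
so the difference in means is `(1/N₁ + 1/N₀) T_v(z)`. Expanding `T_v T_w` over pairs of units,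
its expectation is `∑_{i,j} π_ij v_i w_j`, where the joint inclusion probabilities come from
counting the `N₁`-subsets containing a given set of units: `π_ii = N₁/N` and
`π_ij = N₁(N₁-1)/(N(N-1))` for `i ≠ j`. The matrix `π` is `(π_ii - π_ij) I + π_ij 𝟙𝟙ᵀ`, and the
second summand is killed by centering, leaving
`(π_ii - π_ij) ∑ v_i w_i = N₁N₀/(N(N-1)) ∑ v_i w_i`. -/

theorem Nat.descFactorial_mul_choose_sub {n k m : ℕ} (hmk : m ≤ k) :
    n.descFactorial m * (n - m).choose (k - m) = k.descFactorial m * n.choose k := by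
  rw [descFactorial_eq_factorial_mul_choose, descFactorial_eq_factorial_mul_choose, mul_assoc,
    ← choose_mul hmk]
  ring

-- In descending factorials the count needs no `#t ≤ k`: for `k < #t` both sides vanish.
theorem Finset.descFactorial_mul_card_filter_powersetCard_superset {α : Type*} [DecidableEq α]
    {t u : Finset α} (htu : t ⊆ u) (k : ℕ) :
    (#u).descFactorial #t * #{s ∈ u.powersetCard k | t ⊆ s}
      = k.descFactorial #t * (#u).choose k := by
  rcases le_or_gt #t k with htk | hkt
  · rw [card_filter_powersetCard_subset t u k htu htk, Nat.descFactorial_mul_choose_sub htk]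
  · have hempty : {s ∈ u.powersetCard k | t ⊆ s} = ∅ :=
      filter_eq_empty_iff.2 fun s hs hts =>
        (card_le_card hts).not_gt ((mem_powersetCard.1 hs).2 ▸ hkt)
    rw [hempty, Nat.descFactorial_eq_zero_iff_lt.2 hkt]
    simp

def treatedGroup {N : ℕ} (z : Fin N → Bool) : Finset (Fin N) := {i | z i = true}

theorem treatedGroup_decide_mem {N : ℕ} (s : Finset (Fin N)) :
    treatedGroup (fun i => decide (i ∈ s)) = s := by
  ext i
  simp [treatedGroup]

theorem card_filter_crDesign {N k : ℕ} (p : Finset (Fin N) → Prop) [DecidablePred p] :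
    #{z ∈ crDesign N k | p (treatedGroup z)} = #{s ∈ powersetCard k univ | p s} := by
  apply card_nbij' treatedGroup (fun s i => decide (i ∈ s))
  · intro z hz
    rw [mem_coe, mem_filter, crDesign, mem_filter] at hz
    rw [mem_coe, mem_filter, mem_powersetCard]
    exact ⟨⟨subset_univ _, hz.1.2⟩, hz.2⟩
  · intro s hs
    rw [mem_coe, mem_filter, mem_powersetCard] at hs
    rw [mem_coe, mem_filter, crDesign, mem_filter, treatedGroup_decide_mem]
    exact ⟨⟨mem_univ _, by simpa using hs.1.2⟩, hs.2⟩
  · intro z _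
    funext i
    simp [treatedGroup]
  · intro s _
    exact treatedGroup_decide_mem s

theorem descFactorial_mul_card_filter_crDesign_superset {N k : ℕ} (t : Finset (Fin N)) :
    N.descFactorial #t * #{z ∈ crDesign N k | t ⊆ treatedGroup z}
      = k.descFactorial #t * N.choose k := by
  rw [card_filter_crDesign (t ⊆ ·)]
  simpa using descFactorial_mul_card_filter_powersetCard_superset (subset_univ t) k

theorem card_crDesign (N k : ℕ) : #(crDesign N k) = N.choose k := by
  simpa using descFactorial_mul_card_filter_crDesign_superset (N := N) (k := k) ∅

theorem Finset.sum_sum_eq_sum_card_filter_mul {α ι R : Type*} [Fintype ι] [DecidableEq ι]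
    [CommSemiring R] (D : Finset α) (S : α → Finset ι) (f : ι → R) :
    ∑ a ∈ D, ∑ i ∈ S a, f i = ∑ i, #{a ∈ D | i ∈ S a} * f i := by
  calc ∑ a ∈ D, ∑ i ∈ S a, f i = ∑ a ∈ D, ∑ i, if i ∈ S a then f i else 0 := by
        simp only [sum_ite_mem, univ_inter]
    _ = ∑ i, ∑ a ∈ D, if i ∈ S a then f i else 0 := sum_comm
    _ = ∑ i, #{a ∈ D | i ∈ S a} * f i := by
        simp only [← sum_filter, sum_const, nsmul_eq_mul]

theorem Finset.sum_sum_mul_mul_of_diag_of_offDiag {ι R : Type*} [Fintype ι] [DecidableEq ι]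
    [CommRing R] {c : ι → ι → R} {a b : R} (hdiag : ∀ i, c i i = a)
    (hoff : ∀ i j, i ≠ j → c i j = b) (v w : ι → R) :
    ∑ i, ∑ j, c i j * (v i * w j) = (a - b) * ∑ i, v i * w i + b * (∑ i, v i) * ∑ j, w j := by
  have hc : ∀ i j, c i j = (a - b) * (if i = j then 1 else 0) + b := by
    intro i j
    by_cases hij : i = j
    · simp [hij, hdiag]
    · simp [hij, hoff i j hij]
  have hrow : ∀ i, ∑ j, c i j * (v i * w j) = (a - b) * (v i * w i) + b * v i * ∑ j, w j := by
    intro i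
    simp only [hc, add_mul, sum_add_distrib, mul_assoc, ite_mul, one_mul, zero_mul, ← mul_sum,
      sum_ite_eq, mem_univ, if_true]
  simp only [hrow, sum_add_distrib, ← mul_sum, ← sum_mul]

section Moments

variable {N k : ℕ} {R : Type*}

theorem natCast_mul_card_filter_crDesign_mem [CommSemiring R] (i : Fin N) :
    (N : R) * #{z ∈ crDesign N k | i ∈ treatedGroup z} = k * N.choose k := by
  have h := descFactorial_mul_card_filter_crDesign_superset (k := k) {i}
  simp only [card_singleton, Nat.descFactorial_one, singleton_subset_iff] at h
  simpa using congrArg (Nat.cast (R := R)) h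

theorem natCast_mul_card_filter_crDesign_mem_mem [CommRing R] {i j : Fin N} (hij : i ≠ j) :
    (N : R) * (N - 1) * #{z ∈ crDesign N k | i ∈ treatedGroup z ∧ j ∈ treatedGroup z}
      = k * (k - 1) * N.choose k := by
  have h := congrArg (Nat.cast (R := R))
    (descFactorial_mul_card_filter_crDesign_superset (k := k) {i, j})
  simp only [card_pair hij, insert_subset_iff, singleton_subset_iff, Nat.cast_mul,
    Nat.cast_descFactorial_two] at h
  exact h

theorem natCast_mul_sum_crDesign_sum_treatedGroup [CommSemiring R] (v : Fin N → R) :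
    (N : R) * ∑ z ∈ crDesign N k, ∑ i ∈ treatedGroup z, v i = k * N.choose k * ∑ i, v i := by
  simp only [sum_sum_eq_sum_card_filter_mul, mul_sum, ← mul_assoc,
    natCast_mul_card_filter_crDesign_mem]

theorem natCast_mul_sum_crDesign_sum_treatedGroup_mul [CommRing R] (v w : Fin N → R) :
    (N : R) * (N - 1)
        * ∑ z ∈ crDesign N k, (∑ i ∈ treatedGroup z, v i) * ∑ i ∈ treatedGroup z, w i
      = k * (N - k) * N.choose k * ∑ i, v i * w i
        + k * (k - 1) * N.choose k * (∑ i, v i) * ∑ i, w i := by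
  have hdiag : ∀ i : Fin N,
      (N : R) * (N - 1) * #{z ∈ crDesign N k | i ∈ treatedGroup z ∧ i ∈ treatedGroup z}
        = (N - 1) * (k * N.choose k) := by
    intro i
    rw [← natCast_mul_card_filter_crDesign_mem (k := k) i]
    simp only [and_self]
    ring
  calc (N : R) * (N - 1) * ∑ z ∈ crDesign N k,
          (∑ i ∈ treatedGroup z, v i) * ∑ i ∈ treatedGroup z, w i
      = (N : R) * (N - 1) * ∑ i, ∑ j,
          #{z ∈ crDesign N k | i ∈ treatedGroup z ∧ j ∈ treatedGroup z} * (v i * w j) := by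
        simp only [sum_mul_sum, ← sum_product', sum_sum_eq_sum_card_filter_mul, mem_product,
          Fintype.sum_prod_type]
    _ = ∑ i, ∑ j, (N : R) * (N - 1)
          * #{z ∈ crDesign N k | i ∈ treatedGroup z ∧ j ∈ treatedGroup z} * (v i * w j) := by
        simp only [mul_sum, mul_assoc]
    _ = ((N - 1) * (k * N.choose k) - k * (k - 1) * N.choose k) * ∑ i, v i * w i
          + k * (k - 1) * N.choose k * (∑ i, v i) * ∑ i, w i :=
        sum_sum_mul_mul_of_diag_of_offDiag hdiag
          (fun _ _ hij => natCast_mul_card_filter_crDesign_mem_mem hij) v w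
    _ = _ := by ring

end Moments

section DiffMeans

variable {N N₁ N₀ : ℕ} {v w : Fin N → ℝ}

theorem diffMeans_eq_of_sum_eq_zero (hv : ∑ i, v i = 0) (z : Fin N → Bool) :
    diffMeans N N₁ N₀ v z = ((N₁ : ℝ)⁻¹ + (N₀ : ℝ)⁻¹) * ∑ i ∈ treatedGroup z, v i := by
  have hsplit := sum_filter_add_sum_filter_not univ (fun i => z i = true) v
  simp only [Bool.not_eq_true, hv] at hsplit
  rw [diffMeans, eq_neg_of_add_eq_zero_right hsplit, treatedGroup]
  ring

theorem crExp_diffMeans_of_sum_eq_zero (hN : N ≠ 0) (hv : ∑ i, v i = 0) :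
    crExp N N₁ (diffMeans N N₁ N₀ v) = 0 := by
  have h := natCast_mul_sum_crDesign_sum_treatedGroup (N := N) (k := N₁) v
  rw [hv, mul_zero, mul_eq_zero, or_iff_right (Nat.cast_ne_zero.2 hN)] at h
  simp only [crExp, diffMeans_eq_of_sum_eq_zero hv, ← mul_sum, h, mul_zero, zero_div]

theorem natCast_mul_crExp_diffMeans_mul_diffMeans (hN₁ : N₁ ≤ N) (hv : ∑ i, v i = 0)
    (hw : ∑ i, w i = 0) :
    (N : ℝ) * (N - 1) * crExp N N₁ (fun z => diffMeans N N₁ N₀ v z * diffMeans N N₁ N₀ w z)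
      = ((N₁ : ℝ)⁻¹ + (N₀ : ℝ)⁻¹) ^ 2 * N₁ * (N - N₁) * ∑ i, v i * w i := by
  have hC : (N.choose N₁ : ℝ) ≠ 0 := Nat.cast_ne_zero.2 (Nat.choose_pos hN₁).ne'
  have hsecond := natCast_mul_sum_crDesign_sum_treatedGroup_mul (N := N) (k := N₁) v w
  rw [hv, hw, mul_zero, add_zero] at hsecond
  simp only [crExp, card_crDesign, diffMeans_eq_of_sum_eq_zero hv, diffMeans_eq_of_sum_eq_zero hw,
    mul_mul_mul_comm _ _ ((N₁ : ℝ)⁻¹ + _), ← mul_sum]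
  field_simp
  linear_combination ((N₁ : ℝ)⁻¹ + (N₀ : ℝ)⁻¹) ^ 2 * hsecond

end DiffMeans

theorem covariance_diff_in_covariate_means_general
    (N N₁ N₀ J : ℕ) (h₁ : 0 < N₁) (h₀ : 0 < N₀) (hsum : N₁ + N₀ = N)
    (x : Fin N → Fin J → ℝ) (hcent : ∀ j, ∑ i, x i j = 0) (j k : Fin J) :
    crExp N N₁ (fun z => diffMeans N N₁ N₀ (fun i => x i j) z
          * diffMeans N N₁ N₀ (fun i => x i k) z)
      - crExp N N₁ (diffMeans N N₁ N₀ (fun i => x i j))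
          * crExp N N₁ (diffMeans N N₁ N₀ (fun i => x i k))
    = (N : ℝ) / ((N₀ : ℝ) * N₁) * ((∑ i, x i j * x i k) / ((N : ℝ) - 1)) := by
  have hN : (N : ℝ) = N₁ + N₀ := by exact_mod_cast hsum.symm
  have hN0 : (N : ℝ) ≠ 0 := by rw [hN]; positivity
  have hN1 : (N : ℝ) - 1 ≠ 0 := sub_ne_zero.2 (by exact_mod_cast (by omega : N ≠ 1))
  have hsecond := natCast_mul_crExp_diffMeans_mul_diffMeans (N₀ := N₀) (by omega : N₁ ≤ N)
    (hcent j) (hcent k)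
  rw [crExp_diffMeans_of_sum_eq_zero (by omega) (hcent j), zero_mul, sub_zero]
  refine mul_left_cancel₀ (mul_ne_zero hN0 hN1) (hsecond.trans ?_)
  rw [hN] at hN1 ⊢
  field_simp
  ring

/-- **Exact covariance of the difference in covariate means.** Under complete randomization
with centered covariates, entrywise, `Cov(τ̂_x) = (N / (N₀ N₁)) S_x²` where
`S_x² = (N−1)⁻¹ Σ_i x_i x_iᵀ`. -/
theorem covariance_diff_in_covariate_means
    (N N₁ N₀ J : ℕ) (hN : 2 ≤ N) (h₁ : 0 < N₁) (h₀ : 0 < N₀) (hsum : N₁ + N₀ = N)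
    (x : Fin N → Fin J → ℝ) (hcent : ∀ j, ∑ i, x i j = 0) (j k : Fin J) :
    crExp N N₁ (fun z => diffMeans N N₁ N₀ (fun i => x i j) z
          * diffMeans N N₁ N₀ (fun i => x i k) z)
      - crExp N N₁ (diffMeans N N₁ N₀ (fun i => x i j))
          * crExp N N₁ (diffMeans N N₁ N₀ (fun i => x i k))
    = (N : ℝ) / ((N₀ : ℝ) * N₁) * ((∑ i, x i j * x i k) / ((N : ℝ) - 1)) :=
  covariance_diff_in_covariate_means_general N N₁ N₀ J h₁ h₀ hsum x hcent j k
end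

section
/- For a finite population with invertible covariate covariance matrix S_x², the following exact algebraic identities hold: v_N − v_L = c_Nᵀ v_x^{-1} c_N ≥ 0 and v_F − v_L = c_Fᵀ v_x^{-1} c_F ≥ 0, where v_x = (e₀ e₁)^{-1} S_x², c_N = S_x² (e₀^{-1} γ₀ + e₁^{-1} γ₁), and c_F = S_x² (e₁^{-1} − e₀^{-1})(γ₁ − γ₀). In particular v_L ≤ v_N and v_L ≤ v_F. -/
open Finset Matrix

noncomputable section

/-- Finite-population mean. -/
def fpMean (N : ℕ) (f : Fin N → ℝ) : ℝ := (∑ i, f i) / N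

/-- Finite-population variance (divisor `N − 1`). -/
def fpVar (N : ℕ) (f : Fin N → ℝ) : ℝ := (∑ i, (f i - fpMean N f) ^ 2) / ((N : ℝ) - 1)

/-- The finite-population covariate covariance matrix `S_x² = (N−1)⁻¹ Σ_i x_i x_iᵀ`
(for centered covariates). -/
def covMat (N J : ℕ) (x : Fin N → Fin J → ℝ) : Matrix (Fin J) (Fin J) ℝ :=
  Matrix.of fun j k => (∑ i, x i j * x i k) / ((N : ℝ) - 1)

/-- Population least-squares coefficient `γ = (S_x²)⁻¹ (N−1)⁻¹ Σ_i x_i (Y_i − Ȳ)`. -/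
def gammaCoef (N J : ℕ) (x : Fin N → Fin J → ℝ) (Y : Fin N → ℝ) : Fin J → ℝ :=
  (covMat N J x)⁻¹.mulVec fun j => (∑ i, x i j * (Y i - fpMean N Y)) / ((N : ℝ) - 1)

/-- `v_* = e₀⁻¹ S²_{0,*} + e₁⁻¹ S²_{1,*} − S²_{τ,*}` for the adjusted potential outcomes
`Y_{i,*}(z) = Y_i(z) − x_iᵀ g_z`. -/
def vVal (N J : ℕ) (x : Fin N → Fin J → ℝ) (Y0 Y1 : Fin N → ℝ) (e1 : ℝ)
    (g0 g1 : Fin J → ℝ) : ℝ :=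
  (1 - e1)⁻¹ * fpVar N (fun i => Y0 i - ∑ j, x i j * g0 j)
    + e1⁻¹ * fpVar N (fun i => Y1 i - ∑ j, x i j * g1 j)
    - fpVar N (fun i => (Y1 i - ∑ j, x i j * g1 j) - (Y0 i - ∑ j, x i j * g0 j))

end

/-! The adjusted outcome `Y - x g` splits as the least-squares residual `Y - x γ` plus
`x (γ - g)`, and the residual is uncorrelated with every linear function of the centered
covariates. So each of the three variances in `v(g₀, g₁)` exceeds its value at `(γ₀, γ₁)` by
`Q(d) = dᵀ S_x² d` for the corresponding `d`, and with `d_z = γ_z - g_z`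
`v(g₀, g₁) - v_L = e₀⁻¹ Q(d₀) + e₁⁻¹ Q(d₁) - Q(d₁ - d₀)`. As `e₀ + e₁ = 1` this equals
`e₀ e₁ Q(e₀⁻¹ d₀ + e₁⁻¹ d₁) = cᵀ v_x⁻¹ c` for `c = S_x² (e₀⁻¹ d₀ + e₁⁻¹ d₁)`, which is `c_N` at
`d = (γ₀, γ₁)` and `c_F` at `d = (γ₀ - γ_F, γ₁ - γ_F)`. -/

lemma inv_smul_sub_convex_comb_add {V : Type*} [AddCommGroup V] [Module ℝ V] {a b : ℝ}
    (ha : a ≠ 0) (hb : b ≠ 0) (hab : a + b = 1) (u v : V) :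
    a⁻¹ • (u - (a • u + b • v)) + b⁻¹ • (v - (a • u + b • v)) = (b⁻¹ - a⁻¹) • (v - u) := by
  obtain rfl : a = 1 - b := by linarith
  match_scalars <;> field_simp <;> ring

lemma inv_weighted_quad_sub {n : Type*} [Fintype n] (A : Matrix n n ℝ) {a b : ℝ} (ha : a ≠ 0)
    (hb : b ≠ 0) (hab : a + b = 1) (u v : n → ℝ) :
    a⁻¹ * (u ⬝ᵥ A *ᵥ u) + b⁻¹ * (v ⬝ᵥ A *ᵥ v) - (v - u) ⬝ᵥ A *ᵥ (v - u)
      = a * b * ((a⁻¹ • u + b⁻¹ • v) ⬝ᵥ A *ᵥ (a⁻¹ • u + b⁻¹ • v)) := by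
  simp only [mulVec_add, mulVec_sub, mulVec_smul, dotProduct_add, dotProduct_sub, add_dotProduct,
    sub_dotProduct, smul_dotProduct, dotProduct_smul, smul_eq_mul]
  obtain rfl : a = 1 - b := by linarith
  field_simp
  ring

lemma mulVec_dotProduct_inv_smul_mulVec {n : Type*} [Fintype n] [DecidableEq n]
    {A : Matrix n n ℝ} (hA : IsUnit A.det) {k : ℝ} (hk : k ≠ 0) (w : n → ℝ) :
    (A *ᵥ w) ⬝ᵥ (k⁻¹ • A)⁻¹ *ᵥ (A *ᵥ w) = k * (w ⬝ᵥ A *ᵥ w) := by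
  have hinv : (k⁻¹ • A)⁻¹ = k • A⁻¹ := by
    let := invertibleOfNonzero (inv_ne_zero hk)
    rw [Matrix.inv_smul A k⁻¹ hA, invOf_eq_inv, inv_inv]
  rw [hinv, smul_mulVec, mulVec_mulVec, nonsing_inv_mul _ hA, one_mulVec, dotProduct_smul,
    smul_eq_mul, dotProduct_comm]

section

variable {N J : ℕ} {x : Fin N → Fin J → ℝ}

lemma fpMean_add (f g : Fin N → ℝ) : fpMean N (f + g) = fpMean N f + fpMean N g := by
  simp only [fpMean, Pi.add_apply, sum_add_distrib, add_div]

lemma fpMean_sub (f g : Fin N → ℝ) : fpMean N (f - g) = fpMean N f - fpMean N g := by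
  simp only [fpMean, Pi.sub_apply, sum_sub_distrib, sub_div]

lemma fpMean_mulVec_eq_zero (hcent : ∀ j, ∑ i, x i j = 0)
    (h : Fin J → ℝ) : fpMean N (of x *ᵥ h) = 0 := by
  simp only [fpMean, mulVec, dotProduct]
  rw [sum_comm]
  simp [← sum_mul, hcent]

-- For `N = 0` the divisor `N - 1` is `-1`, but the sum is empty.
lemma fpVar_nonneg (f : Fin N → ℝ) : 0 ≤ fpVar N f := by
  rcases N with _ | n
  · simp [fpVar]
  · refine div_nonneg (sum_nonneg fun i _ => sq_nonneg _) ?_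
    push_cast
    linarith [n.cast_nonneg (α := ℝ)]

noncomputable def fpCov (N : ℕ) (f g : Fin N → ℝ) : ℝ :=
  (∑ i, (f i - fpMean N f) * (g i - fpMean N g)) / ((N : ℝ) - 1)

lemma fpCov_self (f : Fin N → ℝ) : fpCov N f f = fpVar N f := by
  simp only [fpCov, fpVar, sq]

lemma fpCov_comm (f g : Fin N → ℝ) : fpCov N f g = fpCov N g f := by
  simp only [fpCov, mul_comm]

lemma fpCov_sub_left (f g h : Fin N → ℝ) : fpCov N (f - g) h = fpCov N f h - fpCov N g h := by
  simp only [fpCov, fpMean_sub, Pi.sub_apply, ← sub_div, ← sum_sub_distrib]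
  congr 1
  exact sum_congr rfl fun i _ => by ring

lemma fpVar_add (f g : Fin N → ℝ) :
    fpVar N (f + g) = fpVar N f + 2 * fpCov N f g + fpVar N g := by
  simp only [fpVar, fpCov, fpMean_add, Pi.add_apply, mul_div_assoc', ← add_div, mul_sum,
    ← sum_add_distrib]
  congr 1
  exact sum_congr rfl fun i _ => by ring

lemma covMat_eq_smul :
    covMat N J x = ((N : ℝ) - 1)⁻¹ • ((of x)ᵀ * of x) := by
  ext j k
  simp [covMat, mul_apply, div_eq_inv_mul]

noncomputable def crossCov (N J : ℕ) (x : Fin N → Fin J → ℝ) (Y : Fin N → ℝ) : Fin J → ℝ :=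
  fun j => (∑ i, x i j * (Y i - fpMean N Y)) / ((N : ℝ) - 1)

lemma crossCov_eq_smul (Y : Fin N → ℝ) :
    crossCov N J x Y = ((N : ℝ) - 1)⁻¹ • ((of x)ᵀ *ᵥ fun i => Y i - fpMean N Y) := by
  ext j
  simp [crossCov, mulVec, dotProduct, div_eq_inv_mul]

lemma fpCov_mulVec_right (hcent : ∀ j, ∑ i, x i j = 0)
    (Y : Fin N → ℝ) (h : Fin J → ℝ) : fpCov N Y (of x *ᵥ h) = h ⬝ᵥ crossCov N J x Y := by
  rw [crossCov_eq_smul, dotProduct_smul, dotProduct_mulVec, vecMul_transpose, dotProduct_comm]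
  simp [fpCov, fpMean_mulVec_eq_zero hcent, dotProduct, div_eq_inv_mul]

lemma fpCov_mulVec_mulVec (hcent : ∀ j, ∑ i, x i j = 0)
    (g h : Fin J → ℝ) : fpCov N (of x *ᵥ g) (of x *ᵥ h) = g ⬝ᵥ covMat N J x *ᵥ h := by
  rw [covMat_eq_smul, smul_mulVec, dotProduct_smul, ← mulVec_mulVec, dotProduct_mulVec,
    vecMul_transpose]
  simp [fpCov, fpMean_mulVec_eq_zero hcent, dotProduct, div_eq_inv_mul]

lemma covMat_mulVec_gammaCoef (hSx : IsUnit (covMat N J x).det) (Y : Fin N → ℝ) :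
    covMat N J x *ᵥ gammaCoef N J x Y = crossCov N J x Y := by
  rw [gammaCoef, mulVec_mulVec, mul_nonsing_inv _ hSx, one_mulVec]
  rfl

lemma fpCov_residual_mulVec (hcent : ∀ j, ∑ i, x i j = 0) (hSx : IsUnit (covMat N J x).det)
    (Y : Fin N → ℝ) (h : Fin J → ℝ) :
    fpCov N (Y - of x *ᵥ gammaCoef N J x Y) (of x *ᵥ h) = 0 := by
  rw [fpCov_sub_left, fpCov_mulVec_right hcent, fpCov_comm, fpCov_mulVec_mulVec hcent,
    covMat_mulVec_gammaCoef hSx, sub_self]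

lemma fpVar_add_mulVec (hcent : ∀ j, ∑ i, x i j = 0) {R : Fin N → ℝ}
    (hR : ∀ h, fpCov N R (of x *ᵥ h) = 0) (d : Fin J → ℝ) :
    fpVar N (R + of x *ᵥ d) = fpVar N R + d ⬝ᵥ covMat N J x *ᵥ d := by
  rw [fpVar_add, hR, ← fpCov_self (of x *ᵥ d), fpCov_mulVec_mulVec hcent]
  ring

lemma dotProduct_covMat_mulVec_self_nonneg (hcent : ∀ j, ∑ i, x i j = 0) (d : Fin J → ℝ) :
    0 ≤ d ⬝ᵥ covMat N J x *ᵥ d := by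
  rw [← fpCov_mulVec_mulVec hcent, fpCov_self]
  exact fpVar_nonneg _

lemma vVal_eq_mulVec (Y0 Y1 : Fin N → ℝ) (e1 : ℝ) (g0 g1 : Fin J → ℝ) :
    vVal N J x Y0 Y1 e1 g0 g1 = (1 - e1)⁻¹ * fpVar N (Y0 - of x *ᵥ g0)
      + e1⁻¹ * fpVar N (Y1 - of x *ᵥ g1)
      - fpVar N ((Y1 - of x *ᵥ g1) - (Y0 - of x *ᵥ g0)) :=
  rfl

lemma vVal_eq_vVal_gammaCoef_add (hcent : ∀ j, ∑ i, x i j = 0)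
    (hSx : IsUnit (covMat N J x).det) (Y0 Y1 : Fin N → ℝ) (e1 : ℝ) (g0 g1 : Fin J → ℝ) :
    let γ0 := gammaCoef N J x Y0
    let γ1 := gammaCoef N J x Y1
    let Q : (Fin J → ℝ) → ℝ := fun d => d ⬝ᵥ covMat N J x *ᵥ d
    vVal N J x Y0 Y1 e1 g0 g1 = vVal N J x Y0 Y1 e1 γ0 γ1
      + (1 - e1)⁻¹ * Q (γ0 - g0) + e1⁻¹ * Q (γ1 - g1) - Q ((γ1 - g1) - (γ0 - g0)) := by
  intro γ0 γ1 Q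
  have hR0 := fpCov_residual_mulVec hcent hSx Y0
  have hR1 := fpCov_residual_mulVec hcent hSx Y1
  have hR10 : ∀ h, fpCov N ((Y1 - of x *ᵥ γ1) - (Y0 - of x *ᵥ γ0)) (of x *ᵥ h) = 0 := fun h => by
    rw [fpCov_sub_left, hR1, hR0, sub_self]
  have hsplit : ∀ (Y : Fin N → ℝ) (γ g : Fin J → ℝ),
      Y - of x *ᵥ g = (Y - of x *ᵥ γ) + of x *ᵥ (γ - g) := fun Y γ g => by
    rw [mulVec_sub]; abel
  have hsplit10 : (Y1 - of x *ᵥ g1) - (Y0 - of x *ᵥ g0)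
      = ((Y1 - of x *ᵥ γ1) - (Y0 - of x *ᵥ γ0)) + of x *ᵥ ((γ1 - g1) - (γ0 - g0)) := by
    simp only [mulVec_sub]; abel
  rw [vVal_eq_mulVec, vVal_eq_mulVec, hsplit10, hsplit Y0 γ0 g0, hsplit Y1 γ1 g1,
    fpVar_add_mulVec hcent hR0, fpVar_add_mulVec hcent hR1, fpVar_add_mulVec hcent hR10]
  ring

end

/-- **Exact algebraic identities** `v_N − v_L = c_Nᵀ v_x⁻¹ c_N ≥ 0` and
`v_F − v_L = c_Fᵀ v_x⁻¹ c_F ≥ 0`; in particular `v_L ≤ v_N` and `v_L ≤ v_F`. -/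
theorem v_differences_quadratic_forms
    (N J : ℕ) (x : Fin N → Fin J → ℝ) (hcent : ∀ j, ∑ i, x i j = 0)
    (Y0 Y1 : Fin N → ℝ) (e1 : ℝ) (he0 : 0 < e1) (he1 : e1 < 1)
    (hSx : IsUnit (covMat N J x).det) :
    let e0 : ℝ := 1 - e1
    let γ0 : Fin J → ℝ := gammaCoef N J x Y0
    let γ1 : Fin J → ℝ := gammaCoef N J x Y1
    let γF : Fin J → ℝ := e0 • γ0 + e1 • γ1
    let vN : ℝ := vVal N J x Y0 Y1 e1 0 0
    let vF : ℝ := vVal N J x Y0 Y1 e1 γF γF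
    let vL : ℝ := vVal N J x Y0 Y1 e1 γ0 γ1
    let vx : Matrix (Fin J) (Fin J) ℝ := (e0 * e1)⁻¹ • covMat N J x
    let cN : Fin J → ℝ := (covMat N J x).mulVec (e0⁻¹ • γ0 + e1⁻¹ • γ1)
    let cF : Fin J → ℝ := (covMat N J x).mulVec ((e1⁻¹ - e0⁻¹) • (γ1 - γ0))
    vN - vL = cN ⬝ᵥ vx⁻¹.mulVec cN ∧ 0 ≤ cN ⬝ᵥ vx⁻¹.mulVec cN ∧
      vF - vL = cF ⬝ᵥ vx⁻¹.mulVec cF ∧ 0 ≤ cF ⬝ᵥ vx⁻¹.mulVec cF ∧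
      vL ≤ vN ∧ vL ≤ vF := by
  intro e0 γ0 γ1 γF vN vF vL vx cN cF
  set Q : (Fin J → ℝ) → ℝ := fun d => d ⬝ᵥ covMat N J x *ᵥ d
  have hQ_nonneg : ∀ d, 0 ≤ Q d := dotProduct_covMat_mulVec_self_nonneg hcent
  have he0_pos : 0 < e0 := sub_pos.mpr he1
  have hsum : e0 + e1 = 1 := sub_add_cancel 1 e1
  have hpos : 0 < e0 * e1 := mul_pos he0_pos he0
  have hcN : cN ⬝ᵥ vx⁻¹ *ᵥ cN = e0 * e1 * Q (e0⁻¹ • γ0 + e1⁻¹ • γ1) :=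
    mulVec_dotProduct_inv_smul_mulVec hSx hpos.ne' _
  have hcF : cF ⬝ᵥ vx⁻¹ *ᵥ cF = e0 * e1 * Q ((e1⁻¹ - e0⁻¹) • (γ1 - γ0)) :=
    mulVec_dotProduct_inv_smul_mulVec hSx hpos.ne' _
  have hvN : vN - vL = e0 * e1 * Q (e0⁻¹ • γ0 + e1⁻¹ • γ1) := by
    have h := vVal_eq_vVal_gammaCoef_add hcent hSx Y0 Y1 e1 0 0
    simp only [sub_zero] at h
    linarith [inv_weighted_quad_sub (covMat N J x) he0_pos.ne' he0.ne' hsum γ0 γ1]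
  have hvF : vF - vL = e0 * e1 * Q ((e1⁻¹ - e0⁻¹) • (γ1 - γ0)) := by
    have hγ : e0⁻¹ • (γ0 - γF) + e1⁻¹ • (γ1 - γF) = (e1⁻¹ - e0⁻¹) • (γ1 - γ0) :=
      inv_smul_sub_convex_comb_add he0_pos.ne' he0.ne' hsum γ0 γ1
    have h := vVal_eq_vVal_gammaCoef_add hcent hSx Y0 Y1 e1 γF γF
    have h' := inv_weighted_quad_sub (covMat N J x) he0_pos.ne' he0.ne' hsum (γ0 - γF) (γ1 - γF)
    rw [hγ] at h'
    linarith
  have hN_nonneg : 0 ≤ cN ⬝ᵥ vx⁻¹ *ᵥ cN := hcN ▸ mul_nonneg hpos.le (hQ_nonneg _)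
  have hF_nonneg : 0 ≤ cF ⬝ᵥ vx⁻¹ *ᵥ cF := hcF ▸ mul_nonneg hpos.le (hQ_nonneg _)
  exact ⟨hvN.trans hcN.symm, hN_nonneg, hvF.trans hcF.symm, hF_nonneg, by linarith, by linarith⟩
end
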